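/- arXiv:1904.08583 — 2 statements merged into one kernel-verified Lean document; each statement's English description precedes it below -/
import Mathlib

section
/- If a connected graph G has a closure structure, i.e., for any two edges e, e' of G there is a sequence of subgraphs G_1, ..., G_k, each isomorphic to K_3 or K_{2,3}, with e ∈ E(G_1), e' ∈ E(G_k), and E(G_i) ∩ E(G_{i+1}) ≠ ∅ for all i, then md(G) = 1. -/
/-- An MD-coloring: an edge-coloring such that every pair of distinct vertices is
separated by a monochromatic edge-cut (equivalently, by some color class). -/
def isMDColoring {V : Type*} (G : SimpleGraph V) (c : Sym2 V → ℕ) : Prop :=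
  ∀ u v : V, u ≠ v → ∃ i : ℕ, ¬ (G.deleteEdges {e | c e = i}).Reachable u v

/-- The monochromatic disconnection number: the maximum number of colors used on
edges over all MD-colorings. -/
noncomputable def mdNum {V : Type*} (G : SimpleGraph V) : ℕ :=
  sSup {n | ∃ c : Sym2 V → ℕ, isMDColoring G c ∧ (c '' G.edgeSet).ncard = n}

/-!
A color class separating the ends of an edge `uv` must contain `uv` itself, so every `u`–`v`
walk meets the color `c(uv)`. In a triangle this forces one color. In `K_{2,3}` with parts
`{x, y}` and `{p, q, r}`, suppose `c(xp) ≠ c(yp)`. The walks around the 4-cycle `xpyq` together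
with a color separating `p` from `q` force `c(xq) = c(yp)` and `c(yq) = c(xp)`; the same holds
for `r`, and then no color separates `q` from `r`. Hence `c(xt) = c(yt)` for every `t`, and a
color separating `x` from `y` meets all six edges. MD-colorings restrict to subgraphs, so every
block of the closure structure is monochromatic, and overlapping blocks share their color.
-/

open SimpleGraph

namespace isMDColoring

variable {V : Type*} {G : SimpleGraph V} {c : Sym2 V → ℕ}

theorem exists_color (hc : isMDColoring G c) {u v : V} (huv : u ≠ v) :
    ∃ i, ∀ w : G.Walk u v, ∃ e ∈ w.edges, c e = i := by
  obtain ⟨i, hi⟩ := hc u v huv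
  refine ⟨i, fun w => ?_⟩
  obtain ⟨e, he, hew⟩ := w.exists_mem_edges_of_not_reachable_deleteEdges hi
  exact ⟨e, hew, he⟩

theorem exists_color_eq_of_adj (hc : isMDColoring G c) {u v : V} (huv : G.Adj u v)
    (w : G.Walk u v) : ∃ e ∈ w.edges, c e = c s(u, v) := by
  obtain ⟨i, hi⟩ := hc.exists_color huv.ne
  obtain ⟨e, he, rfl⟩ := hi huv.toWalk
  simp only [Walk.edges_cons, Walk.edges_nil, List.mem_singleton] at he
  simpa [he] using hi w

theorem color_eq_of_triangle (hc : isMDColoring G c) {u v w : V} (huv : G.Adj u v)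
    (hvw : G.Adj v w) (huw : G.Adj u w) : c s(u, v) = c s(u, w) := by
  have h₁ := hc.exists_color_eq_of_adj huv (.cons huw (.cons hvw.symm .nil))
  have h₂ := hc.exists_color_eq_of_adj huw (.cons huv (.cons hvw .nil))
  simp only [Walk.edges_cons, Walk.edges_nil, List.exists_mem_cons_iff, List.mem_singleton,
    exists_eq_left, Sym2.eq_swap (a := w)] at h₁ h₂
  omega

theorem color_swap_of_four_cycle (hc : isMDColoring G c) {x y p t : V} (hpt : p ≠ t)
    (hxp : G.Adj x p) (hyp : G.Adj y p) (hxt : G.Adj x t) (hyt : G.Adj y t)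
    (hne : c s(x, p) ≠ c s(y, p)) : c s(x, t) = c s(y, p) ∧ c s(y, t) = c s(x, p) := by
  have hx := hc.exists_color_eq_of_adj hxp (.cons hxt (.cons hyt.symm (.cons hyp .nil)))
  have hy := hc.exists_color_eq_of_adj hyp (.cons hyt (.cons hxt.symm (.cons hxp .nil)))
  obtain ⟨i, hi⟩ := hc.exists_color hpt
  have hix := hi (.cons hxp.symm (.cons hxt .nil))
  have hiy := hi (.cons hyp.symm (.cons hyt .nil))
  simp only [Walk.edges_cons, Walk.edges_nil, List.exists_mem_cons_iff, List.mem_singleton,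
    exists_eq_left, Sym2.eq_swap (a := t), Sym2.eq_swap (a := p)] at hx hy hix hiy
  omega

theorem color_eq_of_three_common_neighbors (hc : isMDColoring G c) {x y p q r : V}
    (hpq : p ≠ q) (hpr : p ≠ r) (hqr : q ≠ r)
    (hxp : G.Adj x p) (hxq : G.Adj x q) (hxr : G.Adj x r)
    (hyp : G.Adj y p) (hyq : G.Adj y q) (hyr : G.Adj y r) : c s(x, p) = c s(y, p) := by
  by_contra hne
  have hq := hc.color_swap_of_four_cycle hpq hxp hyp hxq hyq hne
  have hr := hc.color_swap_of_four_cycle hpr hxp hyp hxr hyr hne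
  obtain ⟨i, hi⟩ := hc.exists_color hqr
  have hix := hi (.cons hxq.symm (.cons hxr .nil))
  have hiy := hi (.cons hyq.symm (.cons hyr .nil))
  simp only [Walk.edges_cons, Walk.edges_nil, List.exists_mem_cons_iff, List.mem_singleton,
    exists_eq_left, Sym2.eq_swap (a := q)] at hix hiy
  omega

theorem exists_color_eq_of_three_common_neighbors (hc : isMDColoring G c) {x y : V}
    (hxy : x ≠ y) {Y : Fin 3 → V} (hY : Function.Injective Y) (hx : ∀ n, G.Adj x (Y n))
    (hy : ∀ n, G.Adj y (Y n)) : ∃ i, ∀ n, c s(x, Y n) = i ∧ c s(y, Y n) = i := by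
  have hdistinct : ∀ n : Fin 3, n ≠ n + 1 ∧ n ≠ n + 2 ∧ n + 1 ≠ n + 2 := by decide
  have hvert (n : Fin 3) : c s(x, Y n) = c s(y, Y n) :=
    have ⟨h₁, h₂, h₃⟩ := hdistinct n
    hc.color_eq_of_three_common_neighbors (hY.ne h₁) (hY.ne h₂) (hY.ne h₃)
      (hx _) (hx _) (hx _) (hy _) (hy _) (hy _)
  obtain ⟨i, hi⟩ := hc.exists_color hxy
  refine ⟨i, fun n => ?_⟩
  have h := hi (.cons (hx n) (.cons (hy n).symm .nil))
  simp only [Walk.edges_cons, Walk.edges_nil, List.exists_mem_cons_iff, List.mem_singleton,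
    exists_eq_left, Sym2.eq_swap (a := Y n), hvert n, or_self] at h
  exact ⟨(hvert n).trans h, h⟩

theorem comap {W : Type*} {K : SimpleGraph W} (hc : isMDColoring G c) (f : K.Copy G) :
    isMDColoring K (c ∘ Sym2.map f) := by
  intro u v huv
  obtain ⟨i, hi⟩ := hc (f u) (f v) (f.injective.ne huv)
  let g : K.deleteEdges {e | c (Sym2.map f e) = i} →g G.deleteEdges {e | c e = i} :=
    ⟨f, fun h => by rw [deleteEdges_adj] at h ⊢; exact ⟨f.toHom.map_adj h.1, h.2⟩⟩
  exact ⟨i, fun h => hi (h.map g)⟩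

theorem subsingleton_image_edgeSet_of_iso {W : Type*} {K : SimpleGraph W}
    (hc : isMDColoring G c)
    (hK : ∀ c' : Sym2 W → ℕ, isMDColoring K c' → (c' '' K.edgeSet).Subsingleton)
    {H : G.Subgraph} (hH : Nonempty (H.coe ≃g K)) : (c '' H.edgeSet).Subsingleton := by
  obtain ⟨f, rfl⟩ : H ∈ Set.range Copy.toSubgraph := by
    rw [Copy.range_toSubgraph]
    exact hH.map Iso.symm
  rw [Subgraph.edgeSet_map, Subgraph.edgeSet_top, Set.image_image]
  exact hK _ (hc.comap f)

end isMDColoring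

theorem isMDColoring_const {V : Type*} (G : SimpleGraph V) (i : ℕ) :
    isMDColoring G (fun _ => i) :=
  fun _ _ huv => ⟨i, by simpa using huv⟩

theorem subsingleton_image_edgeSet_top_fin_three {c : Sym2 (Fin 3) → ℕ}
    (hc : isMDColoring ⊤ c) : (c '' (⊤ : SimpleGraph (Fin 3)).edgeSet).Subsingleton := by
  have h₀ := hc.color_eq_of_triangle (u := 0) (v := 1) (w := 2) (by decide) (by decide)
    (by decide)
  have h₁ := hc.color_eq_of_triangle (u := 1) (v := 0) (w := 2) (by decide) (by decide)
    (by decide)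
  refine Set.subsingleton_of_forall_eq (c s(0, 1)) ?_
  rintro _ ⟨e, he, rfl⟩
  induction e using Sym2.ind with
  | _ a b =>
    fin_cases a <;> fin_cases b <;>
      simp_all [Sym2.eq_swap (b := (0 : Fin 3)), Sym2.eq_swap (a := (2 : Fin 3))]

theorem subsingleton_image_edgeSet_completeBipartiteGraph {c : Sym2 (Fin 2 ⊕ Fin 3) → ℕ}
    (hc : isMDColoring (completeBipartiteGraph (Fin 2) (Fin 3)) c) :
    (c '' (completeBipartiteGraph (Fin 2) (Fin 3)).edgeSet).Subsingleton := by
  obtain ⟨i, hi⟩ := hc.exists_color_eq_of_three_common_neighbors (x := .inl 0) (y := .inl 1)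
    (by simp) Sum.inr_injective (by simp) (by simp)
  refine Set.subsingleton_of_forall_eq i ?_
  rintro _ ⟨e, he, rfl⟩
  induction e using Sym2.ind with
  | _ a b =>
    rcases a with m | n <;> rcases b with m' | n' <;> simp at he
    · fin_cases m <;> simp [hi]
    · fin_cases m' <;> simp [Sym2.eq_swap (a := Sum.inr n), hi]

theorem apply_eq_of_chain {α β : Type*} (g : α → β) {k : ℕ} {S : Fin (k + 1) → Set α}
    (hS : ∀ i, (g '' S i).Subsingleton)
    (hlink : ∀ i : Fin k, (S i.castSucc ∩ S i.succ).Nonempty)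
    {a b : α} (ha : a ∈ S 0) (hb : b ∈ S (Fin.last k)) : g a = g b := by
  suffices ∀ i, ∀ b ∈ S i, g a = g b from this _ b hb
  intro i
  induction i using Fin.induction with
  | zero => exact fun b hb => hS 0 (Set.mem_image_of_mem g ha) (Set.mem_image_of_mem g hb)
  | succ i ih =>
    obtain ⟨x, hx, hx'⟩ := hlink i
    exact fun b hb =>
      (ih x hx).trans (hS _ (Set.mem_image_of_mem g hx') (Set.mem_image_of_mem g hb))

theorem mdNum_eq_one {V : Type*} {G : SimpleGraph V} (hne : G.edgeSet.Nonempty)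
    (h : ∀ c, isMDColoring G c → (c '' G.edgeSet).Subsingleton) : mdNum G = 1 := by
  suffices {n | ∃ c : Sym2 V → ℕ, isMDColoring G c ∧ (c '' G.edgeSet).ncard = n} = {1} by
    rw [mdNum, this, csSup_singleton]
  ext n
  constructor
  · rintro ⟨c, hc, rfl⟩
    obtain ⟨e, he⟩ := hne
    rw [(h c hc).eq_singleton_of_mem (Set.mem_image_of_mem c he), Set.ncard_singleton]
    rfl
  · rintro rfl
    refine ⟨fun _ => 0, isMDColoring_const G 0, ?_⟩
    rw [hne.image_const, Set.ncard_singleton]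

theorem closure_md_general {V : Type*} (G : SimpleGraph V)
    (hne : G.edgeSet.Nonempty)
    (hclo : ∀ e ∈ G.edgeSet, ∀ e' ∈ G.edgeSet, ∃ (k : ℕ) (f : Fin (k + 1) → G.Subgraph),
      (∀ i, Nonempty ((f i).coe ≃g (⊤ : SimpleGraph (Fin 3))) ∨
        Nonempty ((f i).coe ≃g completeBipartiteGraph (Fin 2) (Fin 3))) ∧
      e ∈ (f 0).edgeSet ∧ e' ∈ (f (Fin.last k)).edgeSet ∧
      ∀ i : Fin k, ((f i.castSucc).edgeSet ∩ (f i.succ).edgeSet).Nonempty) :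
    mdNum G = 1 := by
  refine mdNum_eq_one hne fun c hc => ?_
  rintro _ ⟨e, he, rfl⟩ _ ⟨e', he', rfl⟩
  obtain ⟨k, f, hblock, he, he', hlink⟩ := hclo e he e' he'
  refine apply_eq_of_chain c (S := fun i => (f i).edgeSet) (fun i => ?_) hlink he he'
  rcases hblock i with hK₃ | hK₂₃
  · exact hc.subsingleton_image_edgeSet_of_iso
      (fun _ => subsingleton_image_edgeSet_top_fin_three) hK₃
  · exact hc.subsingleton_image_edgeSet_of_iso
      (fun _ => subsingleton_image_edgeSet_completeBipartiteGraph) hK₂₃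

theorem closure_md {V : Type*} [Fintype V] (G : SimpleGraph V) (hG : G.Connected)
    (hne : G.edgeSet.Nonempty)
    (hclo : ∀ e ∈ G.edgeSet, ∀ e' ∈ G.edgeSet, ∃ (k : ℕ) (f : Fin (k + 1) → G.Subgraph),
      (∀ i, Nonempty ((f i).coe ≃g (⊤ : SimpleGraph (Fin 3))) ∨
        Nonempty ((f i).coe ≃g completeBipartiteGraph (Fin 2) (Fin 3))) ∧
      e ∈ (f 0).edgeSet ∧ e' ∈ (f (Fin.last k)).edgeSet ∧
      ∀ i : Fin k, ((f i.castSucc).edgeSet ∩ (f i.succ).edgeSet).Nonempty) :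
    mdNum G = 1 :=
  closure_md_general G hne hclo
end

section
/- Let M be a minimal matching cut of a connected graph G, and let G' be the underlying simple graph of G/M (the graph obtained by contracting all edges of M). Then md(G') ≤ md(G) - 1. -/
namespace SimpleGraph

variable {V W : Type*}

theorem Reachable.map_of_adj {H : SimpleGraph V} {H' : SimpleGraph W} (g : V → W)
    (hadj : ∀ a b, H.Adj a b → H'.Reachable (g a) (g b)) {u v : V} (h : H.Reachable u v) :
    H'.Reachable (g u) (g v) := by
  rw [reachable_iff_reflTransGen] at h ⊢
  exact h.lift' g fun a b hab => (reachable_iff_reflTransGen _ _).mp (hadj a b hab)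

variable {G : SimpleGraph V} {M : Set (Sym2 V)}

theorem preconnected_deleteEdges_of_reachable {u v : V}
    (hpre : (G.deleteEdges (M \ {s(u, v)})).Preconnected)
    (huv : (G.deleteEdges M).Reachable u v) : (G.deleteEdges M).Preconnected := by
  intro x y
  refine (hpre x y).map_of_adj id fun a b hab => ?_
  obtain ⟨hab, hnot⟩ := deleteEdges_adj.mp hab
  by_cases hm : s(a, b) ∈ M
  · have heq : s(a, b) = s(u, v) := by_contra fun hne => hnot ⟨hm, hne⟩
    rcases Sym2.eq_iff.mp heq with ⟨rfl, rfl⟩ | ⟨rfl, rfl⟩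
    exacts [huv, huv.symm]
  · exact (deleteEdges_adj.mpr ⟨hab, hm⟩).reachable

theorem not_reachable_deleteEdges_of_minimal_cut (hcut : ¬ (G.deleteEdges M).Preconnected)
    (hmin : ∀ M' ⊆ M, M' ≠ M → (G.deleteEdges M').Preconnected) {u v : V}
    (huv : s(u, v) ∈ M) : ¬ (G.deleteEdges M).Reachable u v := fun hreach =>
  hcut <| preconnected_deleteEdges_of_reachable
    (hmin _ Set.sdiff_subset fun h => (h ▸ huv).2 rfl) hreach

end SimpleGraph

open SimpleGraph

section MDNum

variable {V : Type*} {G : SimpleGraph V}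

theorem ncard_image_le_mdNum [Finite V] {c : Sym2 V → ℕ} (hc : isMDColoring G c) :
    (c '' G.edgeSet).ncard ≤ mdNum G := by
  refine le_csSup ⟨G.edgeSet.ncard, ?_⟩ ⟨c, hc, rfl⟩
  rintro n ⟨c, -, rfl⟩
  exact Set.ncard_image_le G.edgeSet.toFinite

theorem mdNum_le {k : ℕ} (h : ∀ c, isMDColoring G c → (c '' G.edgeSet).ncard ≤ k) :
    mdNum G ≤ k :=
  csSup_le' fun _ ⟨c, hc, hn⟩ => hn ▸ h c hc

end MDNum

section LiftColoring

variable {V W : Type*} {G : SimpleGraph V} {G' : SimpleGraph W} {M : Set (Sym2 V)} {f : V → W}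

open Classical in
noncomputable def liftColoring (M : Set (Sym2 V)) (f : V → W) (c' : Sym2 W → ℕ) (e : Sym2 V) :
    ℕ :=
  if e ∈ M then 0 else c' (e.map f) + 1

theorem liftColoring_eq_zero_iff {c' : Sym2 W → ℕ} {e : Sym2 V} :
    liftColoring M f c' e = 0 ↔ e ∈ M := by
  by_cases h : e ∈ M <;> simp [liftColoring, h]

theorem liftColoring_of_notMem {c' : Sym2 W → ℕ} {u v : V} (h : s(u, v) ∉ M) :
    liftColoring M f c' s(u, v) = c' s(f u, f v) + 1 := by
  simp [liftColoring, h]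

theorem notMem_of_map_ne (hM : ∀ u v, s(u, v) ∈ M → f u = f v) {u v : V}
    (h : f u ≠ f v) : s(u, v) ∉ M :=
  fun hm => h (hM u v hm)

theorem isMDColoring_liftColoring (hfid : ∀ u v : V, f u = f v ↔ u = v ∨ s(u, v) ∈ M)
    (hsep : ∀ u v, s(u, v) ∈ M → ¬ (G.deleteEdges M).Reachable u v)
    (hG' : ∀ u v, G.Adj u v → f u ≠ f v → G'.Adj (f u) (f v))
    {c' : Sym2 W → ℕ} (hc' : isMDColoring G' c') : isMDColoring G (liftColoring M f c') := by
  intro u v huv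
  by_cases h : f u = f v
  · refine ⟨0, ?_⟩
    simp only [liftColoring_eq_zero_iff, Set.ofPred_mem_eq]
    exact hsep u v (((hfid u v).mp h).resolve_left huv)
  obtain ⟨i, hi⟩ := hc' (f u) (f v) h
  refine ⟨i + 1, fun hr => hi (hr.map_of_adj f fun a b hab => ?_)⟩
  obtain ⟨hab, hcol⟩ := deleteEdges_adj.mp hab
  by_cases hfab : f a = f b
  · rw [hfab]
  have hm := notMem_of_map_ne (fun u v h => (hfid u v).mpr (.inr h)) hfab
  refine (deleteEdges_adj.mpr ⟨hG' a b hab hfab, fun hi' => hcol ?_⟩).reachable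
  exact (liftColoring_of_notMem hm).trans (congrArg (· + 1) hi')

theorem ncard_image_liftColoring [Finite V] (hM : ∀ u v, s(u, v) ∈ M → f u = f v)
    (hMne : M.Nonempty) (hMe : M ⊆ G.edgeSet)
    (hG' : ∀ x y, G'.Adj x y → ∃ u v, f u = x ∧ f v = y ∧ G.Adj u v) (c' : Sym2 W → ℕ) :
    (c' '' G'.edgeSet).ncard + 1 ≤ (liftColoring M f c' '' G.edgeSet).ncard := by
  have hsub : insert 0 ((· + 1) '' (c' '' G'.edgeSet)) ⊆ liftColoring M f c' '' G.edgeSet := by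
    rintro j (rfl | ⟨_, ⟨e', he', rfl⟩, rfl⟩)
    · obtain ⟨e, he⟩ := hMne
      exact ⟨e, hMe he, liftColoring_eq_zero_iff.mpr he⟩
    induction e' using Sym2.ind with
    | _ x y =>
      obtain ⟨u, v, rfl, rfl, huv⟩ := hG' x y he'
      exact ⟨s(u, v), huv, liftColoring_of_notMem (notMem_of_map_ne hM he'.ne)⟩
  have hfin := (G.edgeSet.toFinite.image (liftColoring M f c')).subset hsub
  calc (c' '' G'.edgeSet).ncard + 1
      = (insert 0 ((· + 1) '' (c' '' G'.edgeSet))).ncard := by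
        rw [Set.ncard_insert_of_notMem (by simp) (hfin.subset (Set.subset_insert _ _)),
          Set.ncard_image_of_injective _ (add_left_injective 1)]
    _ ≤ _ := Set.ncard_le_ncard hsub

end LiftColoring

theorem contract_matchingCut_md_general {V W : Type*} [Fintype V]
    (G : SimpleGraph V) (hG : G.Connected) (M : Set (Sym2 V)) (hMe : M ⊆ G.edgeSet)
    (hcut : ¬ (G.deleteEdges M).Preconnected)
    (hmin : ∀ M' ⊆ M, M' ≠ M → (G.deleteEdges M').Preconnected)
    (f : V → W)
    (hfid : ∀ u v : V, f u = f v ↔ u = v ∨ s(u, v) ∈ M)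
    (G' : SimpleGraph W)
    (hG' : ∀ x y : W, G'.Adj x y ↔ x ≠ y ∧ ∃ u v : V, f u = x ∧ f v = y ∧ G.Adj u v) :
    mdNum G' ≤ mdNum G - 1 := by
  have hMne : M.Nonempty := by
    rw [Set.nonempty_iff_ne_empty]
    rintro rfl
    exact hcut (by simpa using hG.preconnected)
  have hsep : ∀ u v, s(u, v) ∈ M → ¬ (G.deleteEdges M).Reachable u v :=
    fun _ _ => not_reachable_deleteEdges_of_minimal_cut hcut hmin
  have hadj : ∀ u v, G.Adj u v → f u ≠ f v → G'.Adj (f u) (f v) :=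
    fun u v huv hne => (hG' _ _).mpr ⟨hne, u, v, rfl, rfl, huv⟩
  have hM : ∀ u v, s(u, v) ∈ M → f u = f v := fun u v h => (hfid u v).mpr (.inr h)
  refine mdNum_le fun c' hc' => ?_
  have hmd := ncard_image_le_mdNum (isMDColoring_liftColoring hfid hsep hadj hc')
  have hcard := ncard_image_liftColoring hM hMne hMe (fun x y h => ((hG' x y).mp h).2) c'
  omega

theorem contract_matchingCut_md {V W : Type*} [Fintype V] [Fintype W]
    (G : SimpleGraph V) (hG : G.Connected) (M : Set (Sym2 V)) (hMe : M ⊆ G.edgeSet)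
    (hmatch : ∀ e ∈ M, ∀ f ∈ M, e ≠ f → ∀ v : V, v ∈ e → v ∉ f)
    (hcut : ¬ (G.deleteEdges M).Preconnected)
    (hmin : ∀ M' ⊆ M, M' ≠ M → (G.deleteEdges M').Preconnected)
    (f : V → W) (hf : Function.Surjective f)
    (hfid : ∀ u v : V, f u = f v ↔ u = v ∨ s(u, v) ∈ M)
    (G' : SimpleGraph W)
    (hG' : ∀ x y : W, G'.Adj x y ↔ x ≠ y ∧ ∃ u v : V, f u = x ∧ f v = y ∧ G.Adj u v) :
    mdNum G' ≤ mdNum G - 1 :=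
  contract_matchingCut_md_general G hG M hMe hcut hmin f hfid G' hG'
end
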